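/- arXiv:1610.05414 — 8 statements merged into one kernel-verified Lean document; each statement's English description precedes it below -/
import Mathlib

section
/- Let n ≥ 3 and let h and w be real symmetric n×n matrices. Suppose the rank of h is at least 3, and suppose that for all indices i, j, k, l one has h_{ik}·w_{jl} + h_{jl}·w_{ik} = h_{il}·w_{jk} + h_{jk}·w_{il} (i.e. the Kulkarni–Nomizu type product of h and w vanishes, which is the linearized Gauss equation for hypersurfaces). Then w = 0. -/
/-!
The identity is multilinear, so it also holds for the bilinear forms of `h` and `w` evaluated
at arbitrary vectors. Since `rank h ≥ 3`, there are three eigenvectors `u₁, u₂, u₃` of `h` with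
nonzero eigenvalues `d₁, d₂, d₃`; they are `h`-orthogonal. Evaluating the identity at
`(uᵢ, uⱼ, uᵢ, uⱼ)` gives `dᵢ w(uⱼ, uⱼ) + dⱼ w(uᵢ, uᵢ) = 0` for `i ≠ j`, and these three
equations force `w(uᵢ, uᵢ) = 0`. Then `(uₖ, uᵢ, uₖ, uⱼ)` gives `w(uᵢ, uⱼ) = 0`,
`(uⱼ, uᵢ, uⱼ, y)` gives `w(uᵢ, y) = 0`, and finally `(uᵢ, x, uᵢ, y)` gives `dᵢ w(x, y) = 0`.
-/

open Matrix Finset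

def KulkarniNomizuVanishes {V K : Type*} [Add K] [Mul K] (h w : V → V → K) : Prop :=
  ∀ x y z t, h x z * w y t + h y t * w x z = h x t * w y z + h y z * w x t

namespace KulkarniNomizuVanishes

variable {V K ι : Type*} [Field K] {h w : V → V → K} {u : ι → V}

theorem apply_self_mul_add_eq_zero (hKN : KulkarniNomizuVanishes h w)
    (hu : Pairwise fun i j => h (u i) (u j) = 0) {i j : ι} (hij : i ≠ j) :
    h (u i) (u i) * w (u j) (u j) + h (u j) (u j) * w (u i) (u i) = 0 := by
  simpa [hu hij, hu hij.symm] using hKN (u i) (u j) (u i) (u j)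

theorem apply_self_eq_zero [NeZero (2 : K)] (hKN : KulkarniNomizuVanishes h w)
    (hu : Pairwise fun i j => h (u i) (u j) = 0) (hd : ∀ i, h (u i) (u i) ≠ 0)
    {i j k : ι} (hij : i ≠ j) (hik : i ≠ k) (hjk : j ≠ k) :
    w (u i) (u i) = 0 := by
  have : 2 * h (u j) (u j) * h (u k) (u k) * w (u i) (u i) = 0 := by
    linear_combination h (u k) (u k) * hKN.apply_self_mul_add_eq_zero hu hij +
      h (u j) (u j) * hKN.apply_self_mul_add_eq_zero hu hik -
      h (u i) (u i) * hKN.apply_self_mul_add_eq_zero hu hjk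
  simpa [two_ne_zero, hd j, hd k] using this

theorem apply_eq_zero_of_ne [NeZero (2 : K)] (hKN : KulkarniNomizuVanishes h w)
    (hu : Pairwise fun i j => h (u i) (u j) = 0) (hd : ∀ i, h (u i) (u i) ≠ 0)
    {i j k : ι} (hij : i ≠ j) (hik : i ≠ k) (hjk : j ≠ k) :
    w (u i) (u j) = 0 := by
  simpa [hu hij, hu hik, hu hjk.symm, hKN.apply_self_eq_zero hu hd hik.symm hjk.symm hij, hd k]
    using hKN (u k) (u i) (u k) (u j)

theorem apply_left_eq_zero [NeZero (2 : K)] (hKN : KulkarniNomizuVanishes h w)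
    (hu : Pairwise fun i j => h (u i) (u j) = 0) (hd : ∀ i, h (u i) (u i) ≠ 0)
    {i j k : ι} (hij : i ≠ j) (hik : i ≠ k) (hjk : j ≠ k) (y : V) :
    w (u i) y = 0 := by
  simpa [hu hij, hKN.apply_self_eq_zero hu hd hij.symm hjk hik,
    hKN.apply_eq_zero_of_ne hu hd hij hik hjk, hd j] using hKN (u j) (u i) (u j) y

theorem eq_zero [NeZero (2 : K)] (hKN : KulkarniNomizuVanishes h w) (hw : ∀ x y, w x y = w y x)
    (hu : Pairwise fun i j => h (u i) (u j) = 0) (hd : ∀ i, h (u i) (u i) ≠ 0)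
    {i j k : ι} (hij : i ≠ j) (hik : i ≠ k) (hjk : j ≠ k) :
    w = 0 := by
  funext x y
  have := hKN (u i) x (u i) y
  rw [hw x (u i), hKN.apply_left_eq_zero hu hd hij hik hjk,
    hKN.apply_left_eq_zero hu hd hij hik hjk, hKN.apply_left_eq_zero hu hd hij hik hjk] at this
  simpa [hd i] using this

end KulkarniNomizuVanishes

section Matrix

variable {m R : Type*} [Fintype m] [DecidableEq m]

theorem Matrix.toLinearMap₂'_mul_toLinearMap₂' [CommSemiring R] (A B : Matrix m m R)
    (x y z t : m → R) :
    toLinearMap₂' R A x z * toLinearMap₂' R B y t =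
      ∑ i, ∑ j, ∑ k, ∑ l, x i * y j * z k * t l * (A i k * B j l) := by
  simp only [toLinearMap₂'_apply, smul_eq_mul, sum_mul_sum]
  exact sum_congr rfl fun i _ => sum_congr rfl fun j _ => sum_congr rfl fun k _ =>
    sum_congr rfl fun l _ => by ring

theorem KulkarniNomizuVanishes.toLinearMap₂' [CommRing R] {h w : Matrix m m R}
    (hKN : KulkarniNomizuVanishes h w) :
    KulkarniNomizuVanishes (fun x y : m → R => Matrix.toLinearMap₂' R h x y)
      (fun x y : m → R => Matrix.toLinearMap₂' R w x y) := by
  intro x y z t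
  rw [mul_comm (Matrix.toLinearMap₂' R h y t), mul_comm (Matrix.toLinearMap₂' R h y z)]
  simp only [Matrix.toLinearMap₂'_mul_toLinearMap₂', ← sum_add_distrib]
  refine sum_congr rfl fun i _ => sum_congr rfl fun j _ => ?_
  conv_rhs => rw [sum_comm]
  exact sum_congr rfl fun k _ => sum_congr rfl fun l _ => by
    linear_combination x i * y j * z k * t l * hKN i j k l

theorem Matrix.IsSymm.toLinearMap₂'_comm [CommSemiring R] {A : Matrix m m R} (hA : A.IsSymm)
    (x y : m → R) : toLinearMap₂' R A x y = toLinearMap₂' R A y x := by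
  rw [toLinearMap₂'_apply', toLinearMap₂'_apply', dotProduct_mulVec, ← mulVec_transpose, hA.eq,
    dotProduct_comm]

theorem Matrix.IsHermitian.toLinearMap₂'_eigenvectorBasis {A : Matrix m m ℝ}
    (hA : A.IsHermitian) (i j : m) :
    toLinearMap₂' ℝ A (hA.eigenvectorBasis i) (hA.eigenvectorBasis j) =
      if i = j then hA.eigenvalues i else 0 := by
  rw [toLinearMap₂'_apply', hA.mulVec_eigenvectorBasis, dotProduct_smul, smul_eq_mul,
    ← star_trivial (hA.eigenvectorBasis i).ofLp, dotProduct_comm,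
    ← EuclideanSpace.inner_eq_star_dotProduct,
    orthonormal_iff_ite.mp hA.eigenvectorBasis.orthonormal]
  split_ifs with hij <;> simp [hij]

end Matrix

theorem stmt_0_general (n : ℕ) (h w : Matrix (Fin n) (Fin n) ℝ)
    (hhsymm : h.IsSymm) (hwsymm : w.IsSymm)
    (hrank : 3 ≤ h.rank)
    (hKN : ∀ i j k l : Fin n,
      h i k * w j l + h j l * w i k = h i l * w j k + h j k * w i l) :
    w = 0 := by
  have hH : h.IsHermitian := isHermitian_iff_isSymm.mpr hhsymm
  let u : {i // hH.eigenvalues i ≠ 0} → Fin n → ℝ := fun i => hH.eigenvectorBasis i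
  have hu : Pairwise fun i j => toLinearMap₂' ℝ h (u i) (u j) = 0 := fun i j hij => by
    simp [u, hH.toLinearMap₂'_eigenvectorBasis, Subtype.val_injective.ne hij]
  have hd : ∀ i, toLinearMap₂' ℝ h (u i) (u i) ≠ 0 := fun i => by
    simp [u, hH.toLinearMap₂'_eigenvectorBasis, i.2]
  obtain ⟨a, b, c, hab, hac, hbc⟩ :=
    Fintype.two_lt_card_iff.mp (hH.rank_eq_card_non_zero_eigs ▸ hrank)
  have hW := (KulkarniNomizuVanishes.toLinearMap₂' hKN).eq_zero hwsymm.toLinearMap₂'_comm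
    hu hd hab hac hbc
  exact (toLinearMap₂' ℝ).map_eq_zero_iff.mp (LinearMap.ext₂ fun x y => congrFun₂ hW x y)

/-- If `h` and `w` are real symmetric `n × n` matrices (`n ≥ 3`), the rank of `h`
is at least 3, and the Kulkarni–Nomizu type product of `h` and `w` vanishes (the linearized
Gauss equation), then `w = 0`. -/
theorem stmt_0 (n : ℕ) (hn : 3 ≤ n) (h w : Matrix (Fin n) (Fin n) ℝ)
    (hhsymm : h.IsSymm) (hwsymm : w.IsSymm)
    (hrank : 3 ≤ h.rank)
    (hKN : ∀ i j k l : Fin n,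
      h i k * w j l + h j l * w i k = h i l * w j k + h j k * w i l) :
    w = 0 :=
  stmt_0_general n h w hhsymm hwsymm hrank hKN
end

section
/- Let n ≥ 3 and let h be a real diagonal n×n matrix whose first three diagonal entries h_{11}, h_{22}, h_{33} are all nonzero, and let w be a real symmetric n×n matrix such that for all indices i, j, k, l one has h_{kj}·w_{il} − h_{lj}·w_{ik} = h_{ki}·w_{jl} − h_{li}·w_{jk}. Then w = 0. -/
/-- If `h` is a real diagonal `n × n` matrix (`n ≥ 3`) whose first three diagonal
entries are nonzero, and `w` is a real symmetric `n × n` matrix satisfying the linearized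
Gauss equation `h k j * w i l - h l j * w i k = h k i * w j l - h l i * w j k`, then `w = 0`. -/
theorem stmt_1 (n : ℕ) (hn : 3 ≤ n) (h w : Matrix (Fin n) (Fin n) ℝ)
    (hdiag : ∀ i j : Fin n, i ≠ j → h i j = 0)
    (h11 : h ⟨0, by omega⟩ ⟨0, by omega⟩ ≠ 0)
    (h22 : h ⟨1, by omega⟩ ⟨1, by omega⟩ ≠ 0)
    (h33 : h ⟨2, by omega⟩ ⟨2, by omega⟩ ≠ 0)
    (hwsymm : w.IsSymm)
    (hKN : ∀ i j k l : Fin n,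
      h k j * w i l - h l j * w i k = h k i * w j l - h l i * w j k) :
    w = 0 := by
  have e0 : Fin n := ⟨0, by omega⟩
  set a : Fin n := ⟨0, by omega⟩ with ha
  set b : Fin n := ⟨1, by omega⟩ with hb
  set c : Fin n := ⟨2, by omega⟩ with hc
  have hab : a ≠ b := by simp [ha, hb, Fin.ext_iff]
  have hac : a ≠ c := by simp [ha, hc, Fin.ext_iff]
  have hbc : b ≠ c := by simp [hb, hc, Fin.ext_iff]
  have ha0 : h a a ≠ 0 := h11
  have hb0 : h b b ≠ 0 := h22
  have hc0 : h c c ≠ 0 := h33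
  -- diagonal relation
  have hdrel : ∀ i j : Fin n, i ≠ j → h j j * w i i + h i i * w j j = 0 := by
    intro i j hij
    have H := hKN i j j i
    rw [hdiag i j hij, hdiag j i hij.symm] at H
    linarith [H]
  have eq1 := hdrel a b hab
  have eq2 := hdrel a c hac
  have eq3 := hdrel b c hbc
  have waa : w a a = 0 := by
    have key : 2 * h b b * h c c * w a a = 0 := by
      linear_combination h c c * eq1 + h b b * eq2 - h a a * eq3
    have := mul_ne_zero (mul_ne_zero (two_ne_zero (α := ℝ)) hb0) hc0
    exact (mul_eq_zero.mp key).resolve_left this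
  have wdiag : ∀ i : Fin n, w i i = 0 := by
    intro i
    by_cases hi : i = a
    · rw [hi]; exact waa
    · have := hdrel i a (fun e => hi e)
      rw [waa, mul_zero, add_zero] at this
      exact (mul_eq_zero.mp this).resolve_left ha0
  -- off-diagonal
  have woff : ∀ i l : Fin n, i ≠ l → w i l = 0 := by
    intro i l hil
    obtain ⟨j, hj0, hji, hjl⟩ : ∃ j : Fin n, h j j ≠ 0 ∧ j ≠ i ∧ j ≠ l := by
      by_cases h1 : a ≠ i ∧ a ≠ l
      · exact ⟨a, ha0, h1.1, h1.2⟩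
      by_cases h2 : b ≠ i ∧ b ≠ l
      · exact ⟨b, hb0, h2.1, h2.2⟩
      rw [not_and_or, not_ne_iff, not_ne_iff] at h1 h2
      refine ⟨c, hc0, ?_, ?_⟩ <;>
        rcases h1 with h1 | h1 <;> rcases h2 with h2 | h2 <;>
          first
            | exact absurd (h1.trans h2.symm) hab
            | exact fun e => hac (h1.trans e.symm)
            | exact fun e => hbc (h2.trans e.symm)
    have H := hKN i j j l
    rw [hdiag l j (fun e => hjl e.symm), hdiag j i hji,
        hdiag l i (fun e => hil e.symm)] at H
    have : h j j * w i l = 0 := by linarith [H]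
    exact (mul_eq_zero.mp this).resolve_left hj0
  ext i j
  by_cases hij : i = j
  · rw [hij]; simpa using wdiag j
  · simpa using woff i j hij
end

section
/- Let U ⊆ ℝ² be open and let h, w : U → M₂(ℝ) be continuously differentiable maps such that at every point x ∈ U the matrix h(x) is symmetric and invertible, the matrix w(x) is symmetric, the trace of h(x)⁻¹·w(x) is zero, and the Codazzi-type equations ∂₂(w₁₁) = ∂₁(w₁₂) and ∂₂(w₂₁) = ∂₁(w₂₂) hold on U. Then for each i ∈ {1,2}, the divergence ∂₁[det(h)·(h⁻¹ w h⁻¹)_{i1}] + ∂₂[det(h)·(h⁻¹ w h⁻¹)_{i2}] vanishes identically on U. -/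
/-!
Polarizing the quadratic map `A ↦ adj A` on `2 × 2` matrices gives
`adj A * B * adj A = tr (adj A * B) • adj A - det A • adj B`. For `A = h` and `B = w` with
`tr (h⁻¹ w) = 0` this reads `det h • h⁻¹ w h⁻¹ = -adj w`, so the `h`-dependence disappears.
The rows of `-adj w` are `(-w₂₂, w₁₂)` and `(w₂₁, -w₁₁)`; once `w` is symmetric near the point,
their divergences are exactly the two Codazzi equations.
-/

open Filter Topology

namespace Matrix

variable {R : Type*} [CommRing R]

theorem adjugate_mul_mul_adjugate_fin_two (A B : Matrix (Fin 2) (Fin 2) R) :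
    A.adjugate * B * A.adjugate = (A.adjugate * B).trace • A.adjugate - A.det • B.adjugate := by
  ext i j
  fin_cases i <;> fin_cases j <;>
    simp [adjugate_fin_two, det_fin_two, trace_fin_two, mul_apply, Fin.sum_univ_two, vecMul,
      dotProduct] <;> ring

theorem det_smul_inv_mul_mul_inv_of_trace_eq_zero {A B : Matrix (Fin 2) (Fin 2) R}
    (hA : IsUnit A.det) (htr : (A⁻¹ * B).trace = 0) :
    A.det • (A⁻¹ * B * A⁻¹) = -B.adjugate := by
  set r := Ring.inverse A.det
  have hr : A.det * r = 1 := Ring.mul_inverse_cancel _ hA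
  have hinv : A⁻¹ = r • A.adjugate := inv_def A
  have hadj_tr : (A.adjugate * B).trace = 0 := by
    rw [hinv, smul_mul, trace_smul, smul_eq_mul] at htr
    rw [← one_mul (trace _), ← hr, mul_assoc, htr, mul_zero]
  calc A.det • (A⁻¹ * B * A⁻¹) = (A.det * r * r) • (A.adjugate * B * A.adjugate) := by
        rw [hinv, smul_mul, Matrix.mul_smul, smul_mul, smul_smul, smul_smul]
    _ = r • ((0 : R) • A.adjugate - A.det • B.adjugate) := by
        rw [hr, one_mul, adjugate_mul_mul_adjugate_fin_two, hadj_tr]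
    _ = -B.adjugate := by rw [zero_smul, zero_sub, smul_neg, smul_smul, mul_comm, hr, one_smul]

end Matrix

theorem divergence_adjugate_row_eq_zero {w : ℝ × ℝ → Matrix (Fin 2) (Fin 2) ℝ} {x : ℝ × ℝ}
    (hsymm : ∀ᶠ y in 𝓝 x, (w y).IsSymm)
    (hcod1 : fderiv ℝ (fun y => w y 0 0) x (0, 1) = fderiv ℝ (fun y => w y 0 1) x (1, 0))
    (hcod2 : fderiv ℝ (fun y => w y 1 0) x (0, 1) = fderiv ℝ (fun y => w y 1 1) x (1, 0))
    (i : Fin 2) :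
    fderiv ℝ (fun y => (w y).adjugate i 0) x (1, 0)
      + fderiv ℝ (fun y => (w y).adjugate i 1) x (0, 1) = 0 := by
  have hsymm01 : (fun y => w y 0 1) =ᶠ[𝓝 x] (fun y => w y 1 0) :=
    hsymm.mono fun y hy => (hy.apply 0 1).symm
  fin_cases i <;> simp only [Matrix.adjugate_fin_two, Matrix.of_apply, Matrix.cons_val',
    Matrix.cons_val_zero, Matrix.cons_val_one, Matrix.empty_val', Matrix.cons_val_fin_one,
    Fin.zero_eta, Fin.mk_one, fderiv_fun_neg, neg_apply]
  · rw [hsymm01.fderiv_eq, hcod2, add_neg_cancel]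
  · rw [hsymm01.symm.fderiv_eq, hcod1, neg_add_cancel]

theorem stmt_4_general (U : Set (ℝ × ℝ)) (hU : IsOpen U)
    (h w : ℝ × ℝ → Matrix (Fin 2) (Fin 2) ℝ)
    (hhinv : ∀ x ∈ U, IsUnit (h x).det)
    (hwsymm : ∀ x ∈ U, (w x).IsSymm)
    (htr : ∀ x ∈ U, Matrix.trace ((h x)⁻¹ * w x) = 0)
    (hcod1 : ∀ x ∈ U,
      fderiv ℝ (fun y => w y 0 0) x (0, 1) = fderiv ℝ (fun y => w y 0 1) x (1, 0))
    (hcod2 : ∀ x ∈ U,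
      fderiv ℝ (fun y => w y 1 0) x (0, 1) = fderiv ℝ (fun y => w y 1 1) x (1, 0)) :
    ∀ i : Fin 2, ∀ x ∈ U,
      fderiv ℝ (fun y => (h y).det * ((h y)⁻¹ * w y * (h y)⁻¹) i 0) x (1, 0)
        + fderiv ℝ (fun y => (h y).det * ((h y)⁻¹ * w y * (h y)⁻¹) i 1) x (0, 1) = 0 := by
  intro i x hx
  have hU_nhds : U ∈ 𝓝 x := hU.mem_nhds hx
  have hentry (j : Fin 2) : (fun y => (h y).det * ((h y)⁻¹ * w y * (h y)⁻¹) i j)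
      =ᶠ[𝓝 x] fun y => -(w y).adjugate i j :=
    mem_of_superset hU_nhds fun y hy => congrFun (congrFun
      (Matrix.det_smul_inv_mul_mul_inv_of_trace_eq_zero (hhinv y hy) (htr y hy)) i) j
  rw [(hentry 0).fderiv_eq, (hentry 1).fderiv_eq, fderiv_fun_neg, fderiv_fun_neg, neg_apply,
    neg_apply, ← neg_add, divergence_adjugate_row_eq_zero (mem_of_superset hU_nhds hwsymm)
      (hcod1 x hx) (hcod2 x hx), neg_zero]

/-- divergence-free identity for trace-free Codazzi tensors.
Here `∂₁ f x = fderiv ℝ f x (1,0)` and `∂₂ f x = fderiv ℝ f x (0,1)` are the partial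
derivatives on `ℝ²`, and `(h x)⁻¹ * w x * (h x)⁻¹` is the matrix `h⁻¹ w h⁻¹`. -/
theorem stmt_4 (U : Set (ℝ × ℝ)) (hU : IsOpen U)
    (h w : ℝ × ℝ → Matrix (Fin 2) (Fin 2) ℝ)
    (hh : ∀ i j : Fin 2, ContDiffOn ℝ 1 (fun y => h y i j) U)
    (hw : ∀ i j : Fin 2, ContDiffOn ℝ 1 (fun y => w y i j) U)
    (hhsymm : ∀ x ∈ U, (h x).IsSymm)
    (hhinv : ∀ x ∈ U, IsUnit (h x).det)
    (hwsymm : ∀ x ∈ U, (w x).IsSymm)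
    (htr : ∀ x ∈ U, Matrix.trace ((h x)⁻¹ * w x) = 0)
    (hcod1 : ∀ x ∈ U,
      fderiv ℝ (fun y => w y 0 0) x (0, 1) = fderiv ℝ (fun y => w y 0 1) x (1, 0))
    (hcod2 : ∀ x ∈ U,
      fderiv ℝ (fun y => w y 1 0) x (0, 1) = fderiv ℝ (fun y => w y 1 1) x (1, 0)) :
    ∀ i : Fin 2, ∀ x ∈ U,
      fderiv ℝ (fun y => (h y).det * ((h y)⁻¹ * w y * (h y)⁻¹) i 0) x (1, 0)
        + fderiv ℝ (fun y => (h y).det * ((h y)⁻¹ * w y * (h y)⁻¹) i 1) x (0, 1) = 0 :=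
  stmt_4_general U hU h w hhinv hwsymm htr hcod1 hcod2
end

section
/- Let k : ℝ → ℝ be continuous with k(θ) > 0 for all θ ∈ [0, 2π], and suppose ∫₀^{2π} cos(θ)/k(θ) dθ = 0 and ∫₀^{2π} sin(θ)/k(θ) dθ = 0. Let f : ℝ → ℝ be continuous and set u(θ) = ∫₀^θ f(x)·sin(x) dx and v(θ) = ∫₀^θ f(x)·cos(x) dx. Assume u(2π) = 0, v(2π) = 0, and ∫₀^{2π} (v(θ)·sin(θ) − u(θ)·cos(θ))/k(θ) dθ = 0. Then ∫₀^{2π} f(θ)·(v(θ)·sin(θ) − u(θ)·cos(θ)) dθ ≤ 0. -/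
/-!
Put `w = v sin θ - u cos θ` and `z = u sin θ + v cos θ`. Then `w' = z` and `z' = f - w`, so
`w θ = ∫₀^θ f t sin (θ - t) dt` solves `w'' + w = f` with `w 0 = w' 0 = 0`, and `w (2π) = -u (2π) = 0`.
Integrating by parts, `∫ f w = ∫ w² - ∫ w'²`, so the claim is the Wirtinger inequality `∫ w² ≤ ∫ w'²`,
which needs the mean of `w` to be removed. The correction is `p`, the solution of `p'' + p = ρ` for
`ρ = 1/k`: the closedness conditions make `p` vanish to first order at `0` and `2π`, hence `∫ p = ∫ ρ`,
and force `p ≥ 0`. Wirtinger's inequality for `h = (∫ ρ) w - (∫ w) p` gives the claim, because the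
orthogonality `∫ w ρ = 0` means `∫ w p = ∫ w' p'`, and `∫ p'² = ∫ p² - ∫ p ρ ≤ ∫ p²`.
-/

open Real MeasureTheory Set

theorem memLp_two_ofReal_of_continuousOn {a b : ℝ} {h : ℝ → ℝ} (hh : ContinuousOn h (Icc a b)) :
    MemLp (fun x => (h x : ℂ)) 2 (volume.restrict (Ioc a b)) := by
  have hc : ContinuousOn (fun x => (h x : ℂ)) (Icc a b) :=
    Complex.continuous_ofReal.comp_continuousOn hh
  rw [memLp_two_iff_integrable_sq_norm
    ((hc.aestronglyMeasurable measurableSet_Icc).mono_measure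
      (Measure.restrict_mono Ioc_subset_Icc_self le_rfl))]
  exact ((hc.norm.pow 2).integrableOn_Icc).mono_set Ioc_subset_Icc_self

theorem hasSum_sq_fourierCoeffOn_ofReal {a b : ℝ} (hab : a < b) {h : ℝ → ℝ}
    (hh : ContinuousOn h (Icc a b)) :
    HasSum (fun n => ‖fourierCoeffOn hab (fun x => (h x : ℂ)) n‖ ^ 2)
      ((b - a)⁻¹ * ∫ x in a..b, h x ^ 2) := by
  simpa [Complex.norm_real, sq_abs] using
    hasSum_sq_fourierCoeffOn hab (memLp_two_ofReal_of_continuousOn hh)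

theorem norm_fourierCoeffOn_le_of_hasDerivAt {a b : ℝ} (hab : a < b) {F F' : ℝ → ℂ}
    (hF : ∀ x ∈ uIcc a b, HasDerivAt F (F' x) x) (hF' : IntervalIntegrable F' volume a b)
    (hper : F a = F b) {n : ℤ} (hn : n ≠ 0) :
    ‖fourierCoeffOn hab F n‖ ≤ (b - a) / (2 * π) * ‖fourierCoeffOn hab F' n‖ := by
  have hparts := fourierCoeffOn_of_hasDerivAt hab hn hF hF'
  rw [hper, sub_self, mul_zero, zero_sub] at hparts
  have hnorm : ‖fourierCoeffOn hab F n‖ = (b - a) / (2 * π * |(n : ℝ)|) * ‖fourierCoeffOn hab F' n‖ := by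
    rw [hparts, ← Complex.ofReal_sub]
    simp only [neg_mul, one_div, inv_neg, mul_inv_rev, Complex.inv_I, mul_neg, neg_neg, norm_neg,
      Complex.norm_mul, norm_inv, Complex.norm_intCast, Complex.norm_I, Complex.norm_real,
      norm_eq_abs, abs_of_pos pi_pos, Complex.norm_ofNat, one_mul, abs_of_pos (sub_pos.2 hab)]
    ring
  have hn1 : (1 : ℝ) ≤ |(n : ℝ)| := by exact_mod_cast Int.one_le_abs hn
  have hfactor : (b - a) / (2 * π * |(n : ℝ)|) ≤ (b - a) / (2 * π) :=
    div_le_div_of_nonneg_left (sub_pos.2 hab).le (by positivity)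
      (le_mul_of_one_le_right (by positivity) hn1)
  rw [hnorm]
  gcongr

theorem integral_sq_le_of_hasDerivAt_of_integral_eq_zero {a b : ℝ} (hab : a < b) {h h' : ℝ → ℝ}
    (hh : ∀ x ∈ Icc a b, HasDerivAt h (h' x) x) (hh' : ContinuousOn h' (Icc a b))
    (hper : h a = h b) (hmean : ∫ x in a..b, h x = 0) :
    ∫ x in a..b, h x ^ 2 ≤ ((b - a) / (2 * π)) ^ 2 * ∫ x in a..b, h' x ^ 2 := by
  set c := fourierCoeffOn hab (fun x => (h x : ℂ))
  set c' := fourierCoeffOn hab (fun x => (h' x : ℂ))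
  have hcoeff : ∀ n, ‖c n‖ ^ 2 ≤ ((b - a) / (2 * π)) ^ 2 * ‖c' n‖ ^ 2 := by
    intro n
    rcases eq_or_ne n 0 with rfl | hn
    · have hc0 : c 0 = 0 := by
        simp [c, fourierCoeffOn_eq_integral, intervalIntegral.integral_ofReal, hmean]
      rw [hc0, norm_zero, zero_pow two_ne_zero]
      positivity
    · rw [← mul_pow]
      refine pow_le_pow_left₀ (norm_nonneg _) ?_ 2
      refine norm_fourierCoeffOn_le_of_hasDerivAt hab
        (fun x hx => (hh x (by rwa [uIcc_of_le hab.le] at hx)).ofReal_comp)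
        ((Complex.continuous_ofReal.comp_continuousOn hh').intervalIntegrable_of_Icc hab.le)
        (by rw [hper]) hn
  have hsum := hasSum_le hcoeff (hasSum_sq_fourierCoeffOn_ofReal hab
      fun x hx => (hh x hx).continuousAt.continuousWithinAt)
    ((hasSum_sq_fourierCoeffOn_ofReal hab hh').mul_left (((b - a) / (2 * π)) ^ 2))
  rw [mul_left_comm] at hsum
  exact le_of_mul_le_mul_left hsum (inv_pos.2 (sub_pos.2 hab))

/-- `duhamelSin g θ = ∫₀^θ g t sin (θ - t) dt` (`duhamelSin_eq_integral`) is the solution of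
`y'' + y = g` with `y 0 = y' 0 = 0`, and `duhamelCos g` is its derivative. -/
noncomputable def duhamelSin (g : ℝ → ℝ) (θ : ℝ) : ℝ :=
  sin θ * (∫ t in (0 : ℝ)..θ, g t * cos t) - cos θ * ∫ t in (0 : ℝ)..θ, g t * sin t

noncomputable def duhamelCos (g : ℝ → ℝ) (θ : ℝ) : ℝ :=
  cos θ * (∫ t in (0 : ℝ)..θ, g t * cos t) + sin θ * ∫ t in (0 : ℝ)..θ, g t * sin t

section Duhamel

variable {g : ℝ → ℝ}

theorem hasDerivAt_duhamelSin (hg : Continuous g) (θ : ℝ) :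
    HasDerivAt (duhamelSin g) (duhamelCos g θ) θ := by
  have hC := (hg.mul continuous_cos).integral_hasStrictDerivAt 0 θ |>.hasDerivAt
  have hS := (hg.mul continuous_sin).integral_hasStrictDerivAt 0 θ |>.hasDerivAt
  refine (((hasDerivAt_sin θ).mul hC).sub ((hasDerivAt_cos θ).mul hS)).congr_deriv ?_
  simp only [duhamelCos, Pi.mul_apply]
  ring

theorem hasDerivAt_duhamelCos (hg : Continuous g) (θ : ℝ) :
    HasDerivAt (duhamelCos g) (g θ - duhamelSin g θ) θ := by
  have hC := (hg.mul continuous_cos).integral_hasStrictDerivAt 0 θ |>.hasDerivAt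
  have hS := (hg.mul continuous_sin).integral_hasStrictDerivAt 0 θ |>.hasDerivAt
  refine (((hasDerivAt_cos θ).mul hC).add ((hasDerivAt_sin θ).mul hS)).congr_deriv ?_
  simp only [duhamelSin, Pi.mul_apply]
  linear_combination (g θ) * sin_sq_add_cos_sq θ

theorem continuous_duhamelSin (hg : Continuous g) : Continuous (duhamelSin g) :=
  continuous_iff_continuousAt.2 fun θ => (hasDerivAt_duhamelSin hg θ).continuousAt

theorem continuous_duhamelCos (hg : Continuous g) : Continuous (duhamelCos g) :=
  continuous_iff_continuousAt.2 fun θ => (hasDerivAt_duhamelCos hg θ).continuousAt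

@[simp] theorem duhamelSin_zero : duhamelSin g 0 = 0 := by simp [duhamelSin]

@[simp] theorem duhamelCos_zero : duhamelCos g 0 = 0 := by simp [duhamelCos]

theorem duhamelSin_two_pi : duhamelSin g (2 * π) = -∫ t in (0 : ℝ)..(2 * π), g t * sin t := by
  simp [duhamelSin]

theorem duhamelCos_two_pi : duhamelCos g (2 * π) = ∫ t in (0 : ℝ)..(2 * π), g t * cos t := by
  simp [duhamelCos]

theorem integral_mul_sin_sub (hg : Continuous g) (a b θ : ℝ) :
    ∫ t in a..b, g t * sin (θ - t)
      = sin θ * (∫ t in a..b, g t * cos t) - cos θ * ∫ t in a..b, g t * sin t := by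
  rw [← intervalIntegral.integral_const_mul, ← intervalIntegral.integral_const_mul,
    ← intervalIntegral.integral_sub]
  · refine intervalIntegral.integral_congr fun t _ => ?_
    simp only [sin_sub]
    ring
  · exact (continuous_const.mul (hg.mul continuous_cos)).intervalIntegrable _ _
  · exact (continuous_const.mul (hg.mul continuous_sin)).intervalIntegrable _ _

theorem duhamelSin_eq_integral (hg : Continuous g) (θ : ℝ) :
    duhamelSin g θ = ∫ t in (0 : ℝ)..θ, g t * sin (θ - t) :=
  (integral_mul_sin_sub hg 0 θ θ).symm

/-- For `θ ≥ π` the vanishing moments turn `∫₀^θ g t sin (θ - t) dt` into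
`∫_θ^{2π} g t sin (t - θ) dt`, whose integrand is again nonnegative. -/
theorem duhamelSin_nonneg (hg : Continuous g) (hg0 : ∀ t ∈ Icc 0 (2 * π), 0 ≤ g t)
    (hcos : ∫ t in (0 : ℝ)..(2 * π), g t * cos t = 0)
    (hsin : ∫ t in (0 : ℝ)..(2 * π), g t * sin t = 0) {θ : ℝ} (hθ : θ ∈ Icc 0 (2 * π)) :
    0 ≤ duhamelSin g θ := by
  rcases le_total θ π with hle | hge
  · rw [duhamelSin_eq_integral hg]
    refine intervalIntegral.integral_nonneg hθ.1 fun t ht =>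
      mul_nonneg (hg0 t ⟨ht.1, ht.2.trans hθ.2⟩) ?_
    exact sin_nonneg_of_nonneg_of_le_pi (by linarith [ht.2]) (by linarith [ht.1])
  · have hsplit : ∀ φ : ℝ → ℝ, Continuous φ →
        (∫ t in (0 : ℝ)..θ, φ t) + ∫ t in θ..(2 * π), φ t = ∫ t in (0 : ℝ)..(2 * π), φ t :=
      fun φ hφ => intervalIntegral.integral_add_adjacent_intervals
        (hφ.intervalIntegrable _ _) (hφ.intervalIntegrable _ _)
    have hC := hsplit _ (hg.mul continuous_cos)
    have hS := hsplit _ (hg.mul continuous_sin)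
    have htail : duhamelSin g θ = ∫ t in θ..(2 * π), g t * sin (t - θ) := calc
      duhamelSin g θ = -(sin θ * (∫ t in θ..(2 * π), g t * cos t)
          - cos θ * ∫ t in θ..(2 * π), g t * sin t) := by
        rw [duhamelSin]
        linear_combination (sin θ) * (hC.trans hcos) - (cos θ) * (hS.trans hsin)
      _ = -∫ t in θ..(2 * π), g t * sin (θ - t) := by rw [integral_mul_sin_sub hg]
      _ = ∫ t in θ..(2 * π), g t * sin (t - θ) := by
        rw [← intervalIntegral.integral_neg]
        refine intervalIntegral.integral_congr fun t _ => ?_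
        rw [← neg_sub t θ, sin_neg]
        ring
    rw [htail]
    refine intervalIntegral.integral_nonneg hθ.2 fun t ht =>
      mul_nonneg (hg0 t ⟨hθ.1.trans ht.1, ht.2⟩) ?_
    exact sin_nonneg_of_nonneg_of_le_pi (by linarith [ht.1]) (by linarith [ht.2])

theorem integral_duhamelSin (hg : Continuous g) (b : ℝ) :
    ∫ θ in (0 : ℝ)..b, duhamelSin g θ = (∫ θ in (0 : ℝ)..b, g θ) - duhamelCos g b := by
  have hftc := intervalIntegral.integral_eq_sub_of_hasDerivAt
    (fun θ _ => hasDerivAt_duhamelCos hg θ)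
    ((hg.sub (continuous_duhamelSin hg)).intervalIntegrable 0 b)
  rw [intervalIntegral.integral_sub (hg.intervalIntegrable 0 b)
    ((continuous_duhamelSin hg).intervalIntegrable 0 b), duhamelCos_zero, sub_zero] at hftc
  linarith

theorem integral_duhamelSin_mul {g₂ : ℝ → ℝ} (hg : Continuous g) (hg₂ : Continuous g₂) {b : ℝ}
    (hb : duhamelSin g b = 0) :
    ∫ θ in (0 : ℝ)..b, duhamelSin g θ * g₂ θ
      = (∫ θ in (0 : ℝ)..b, duhamelSin g θ * duhamelSin g₂ θ)
        - ∫ θ in (0 : ℝ)..b, duhamelCos g θ * duhamelCos g₂ θ := by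
  have hparts := intervalIntegral.integral_mul_deriv_eq_deriv_mul
    (fun θ _ => hasDerivAt_duhamelSin hg θ) (fun θ _ => hasDerivAt_duhamelCos hg₂ θ)
    ((continuous_duhamelCos hg).intervalIntegrable 0 b)
    ((hg₂.sub (continuous_duhamelSin hg₂)).intervalIntegrable 0 b)
  simp only [mul_sub, hb, duhamelSin_zero, zero_mul, sub_zero, zero_sub] at hparts
  rw [intervalIntegral.integral_sub] at hparts
  · linarith
  · exact ((continuous_duhamelSin hg).mul hg₂).intervalIntegrable 0 b
  · exact ((continuous_duhamelSin hg).mul (continuous_duhamelSin hg₂)).intervalIntegrable 0 b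

end Duhamel

theorem integral_sub_sq {φ ψ : ℝ → ℝ} (hφ : Continuous φ) (hψ : Continuous ψ) (a b c d : ℝ) :
    ∫ x in a..b, (c * φ x - d * ψ x) ^ 2
      = c ^ 2 * (∫ x in a..b, φ x * φ x) - 2 * c * d * (∫ x in a..b, φ x * ψ x)
        + d ^ 2 * ∫ x in a..b, ψ x * ψ x := by
  have hint : ∀ χ : ℝ → ℝ, Continuous χ → IntervalIntegrable χ volume a b :=
    fun χ hχ => hχ.intervalIntegrable a b
  rw [← intervalIntegral.integral_const_mul, ← intervalIntegral.integral_const_mul,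
    ← intervalIntegral.integral_const_mul, ← intervalIntegral.integral_sub,
    ← intervalIntegral.integral_add]
  · exact intervalIntegral.integral_congr fun x _ => by ring
  · exact hint _ ((continuous_const.mul (hφ.mul hφ)).sub (continuous_const.mul (hφ.mul hψ)))
  · exact hint _ (continuous_const.mul (hψ.mul hψ))
  · exact hint _ (continuous_const.mul (hφ.mul hφ))
  · exact hint _ (continuous_const.mul (hφ.mul hψ))

section Estimate

variable {ρ f : ℝ → ℝ} (hρ : Continuous ρ) (hρpos : ∀ θ ∈ Icc 0 (2 * π), 0 < ρ θ)
  (hρcos : ∫ t in (0 : ℝ)..(2 * π), ρ t * cos t = 0)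
  (hρsin : ∫ t in (0 : ℝ)..(2 * π), ρ t * sin t = 0) (hf : Continuous f)
  (hfsin : ∫ t in (0 : ℝ)..(2 * π), f t * sin t = 0)
  (horth : ∫ θ in (0 : ℝ)..(2 * π), duhamelSin f θ * ρ θ = 0)
include hρ hρpos hρcos hρsin hf hfsin horth

theorem integral_duhamelSin_mul_self_le :
    ∫ θ in (0 : ℝ)..(2 * π), duhamelSin f θ * duhamelSin f θ
      ≤ ∫ θ in (0 : ℝ)..(2 * π), duhamelCos f θ * duhamelCos f θ := by
  set w := duhamelSin f
  set z := duhamelCos f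
  set p := duhamelSin ρ
  set q := duhamelCos ρ
  have hw : w (2 * π) = 0 := by simp [w, duhamelSin_two_pi, hfsin]
  have hp : p (2 * π) = 0 := by simp [p, duhamelSin_two_pi, hρsin]
  have hq : q (2 * π) = 0 := by simp [q, duhamelCos_two_pi, hρcos]
  set m := ∫ θ in (0 : ℝ)..(2 * π), ρ θ
  set c := ∫ θ in (0 : ℝ)..(2 * π), w θ
  have hm : 0 < m := intervalIntegral.intervalIntegral_pos_of_pos_on (hρ.intervalIntegrable _ _)
    (fun θ hθ => hρpos θ (Ioo_subset_Icc_self hθ)) two_pi_pos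
  have hpp : ∫ θ in (0 : ℝ)..(2 * π), p θ * ρ θ
      = (∫ θ in (0 : ℝ)..(2 * π), p θ * p θ) - ∫ θ in (0 : ℝ)..(2 * π), q θ * q θ :=
    integral_duhamelSin_mul hρ hρ hp
  have hpρ : 0 ≤ ∫ θ in (0 : ℝ)..(2 * π), p θ * ρ θ :=
    intervalIntegral.integral_nonneg two_pi_pos.le fun θ hθ =>
      mul_nonneg (duhamelSin_nonneg hρ (fun t ht => (hρpos t ht).le) hρcos hρsin hθ)
        (hρpos θ hθ).le
  have hwp : ∫ θ in (0 : ℝ)..(2 * π), w θ * p θ = ∫ θ in (0 : ℝ)..(2 * π), z θ * q θ := by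
    linarith [integral_duhamelSin_mul hf hρ hw]
  have hmean : ∫ θ in (0 : ℝ)..(2 * π), (m * w θ - c * p θ) = 0 := by
    rw [intervalIntegral.integral_sub, intervalIntegral.integral_const_mul,
      intervalIntegral.integral_const_mul, integral_duhamelSin hρ]
    · change m * c - c * (m - q (2 * π)) = 0
      rw [hq]
      ring
    · exact (continuous_const.mul (continuous_duhamelSin hf)).intervalIntegrable _ _
    · exact (continuous_const.mul (continuous_duhamelSin hρ)).intervalIntegrable _ _
  have hwirt : ∫ θ in (0 : ℝ)..(2 * π), (m * w θ - c * p θ) ^ 2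
      ≤ ∫ θ in (0 : ℝ)..(2 * π), (m * z θ - c * q θ) ^ 2 := by
    simpa [two_pi_pos.ne'] using integral_sq_le_of_hasDerivAt_of_integral_eq_zero two_pi_pos
      (fun θ _ => ((hasDerivAt_duhamelSin hf θ).const_mul m).sub
        ((hasDerivAt_duhamelSin hρ θ).const_mul c))
      ((continuous_const.mul (continuous_duhamelCos hf)).sub
        (continuous_const.mul (continuous_duhamelCos hρ))).continuousOn
      (by simp [w, p, hw, hp]) hmean
  rw [integral_sub_sq (φ := w) (ψ := p) (continuous_duhamelSin hf) (continuous_duhamelSin hρ),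
    integral_sub_sq (φ := z) (ψ := q) (continuous_duhamelCos hf) (continuous_duhamelCos hρ),
    hwp] at hwirt
  have hqp : c ^ 2 * ∫ θ in (0 : ℝ)..(2 * π), q θ * q θ
      ≤ c ^ 2 * ∫ θ in (0 : ℝ)..(2 * π), p θ * p θ :=
    mul_le_mul_of_nonneg_left (by linarith) (sq_nonneg c)
  exact le_of_mul_le_mul_left (by linarith) (pow_pos hm 2)

theorem integral_mul_duhamelSin_nonpos :
    ∫ θ in (0 : ℝ)..(2 * π), f θ * duhamelSin f θ ≤ 0 := calc
  ∫ θ in (0 : ℝ)..(2 * π), f θ * duhamelSin f θ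
      = ∫ θ in (0 : ℝ)..(2 * π), duhamelSin f θ * f θ :=
    intervalIntegral.integral_congr fun θ _ => mul_comm _ _
  _ = (∫ θ in (0 : ℝ)..(2 * π), duhamelSin f θ * duhamelSin f θ)
      - ∫ θ in (0 : ℝ)..(2 * π), duhamelCos f θ * duhamelCos f θ :=
    integral_duhamelSin_mul hf hf (by simp [duhamelSin_two_pi, hfsin])
  _ ≤ 0 := sub_nonpos.2 <|
    integral_duhamelSin_mul_self_le hρ hρpos hρcos hρsin hf hfsin horth

end Estimate

theorem stmt_7_general (k f : ℝ → ℝ) (hk : Continuous k)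
    (hkpos : ∀ θ ∈ Set.Icc (0 : ℝ) (2 * π), 0 < k θ)
    (hcos : (∫ θ in (0 : ℝ)..(2 * π), Real.cos θ / k θ) = 0)
    (hsin : (∫ θ in (0 : ℝ)..(2 * π), Real.sin θ / k θ) = 0)
    (hf : Continuous f)
    (u v : ℝ → ℝ)
    (hu : ∀ θ, u θ = ∫ x in (0 : ℝ)..θ, f x * Real.sin x)
    (hv : ∀ θ, v θ = ∫ x in (0 : ℝ)..θ, f x * Real.cos x)
    (hu2 : u (2 * π) = 0)
    (horth : (∫ θ in (0 : ℝ)..(2 * π),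
      (v θ * Real.sin θ - u θ * Real.cos θ) / k θ) = 0) :
    (∫ θ in (0 : ℝ)..(2 * π), f θ * (v θ * Real.sin θ - u θ * Real.cos θ)) ≤ 0 := by
  set ρ := IccExtend two_pi_pos.le fun θ : Icc 0 (2 * π) => (k θ)⁻¹
  have hρ : Continuous ρ := continuous_IccExtend_iff.2 <|
    (hk.comp continuous_subtype_val).inv₀ fun θ => (hkpos θ θ.2).ne'
  have hρpos : ∀ θ ∈ Icc 0 (2 * π), 0 < ρ θ := fun θ hθ => by
    simpa [ρ, IccExtend_of_mem _ _ hθ] using hkpos θ hθ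
  have hdiv : ∀ φ : ℝ → ℝ,
      ∫ θ in (0 : ℝ)..(2 * π), φ θ / k θ = ∫ θ in (0 : ℝ)..(2 * π), ρ θ * φ θ := by
    intro φ
    refine intervalIntegral.integral_congr fun θ hθ => ?_
    rw [uIcc_of_le two_pi_pos.le] at hθ
    simp [ρ, IccExtend_of_mem _ _ hθ, div_eq_inv_mul]
  have hw : ∀ θ, v θ * sin θ - u θ * cos θ = duhamelSin f θ := fun θ => by
    rw [hu, hv, duhamelSin]
    ring
  simp only [hw] at horth ⊢
  rw [hdiv] at hcos hsin horth
  exact integral_mul_duhamelSin_nonpos hρ hρpos hcos hsin hf ((hu _).symm.trans hu2)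
    ((intervalIntegral.integral_congr fun θ _ => mul_comm _ _).trans horth)

/-- the boundary estimate (3.12) in the proof of Yau's infinitesimal rigidity of
Alexandrov's annuli. -/
theorem stmt_7 (k f : ℝ → ℝ) (hk : Continuous k)
    (hkpos : ∀ θ ∈ Set.Icc (0 : ℝ) (2 * π), 0 < k θ)
    (hcos : (∫ θ in (0 : ℝ)..(2 * π), Real.cos θ / k θ) = 0)
    (hsin : (∫ θ in (0 : ℝ)..(2 * π), Real.sin θ / k θ) = 0)
    (hf : Continuous f)
    (u v : ℝ → ℝ)
    (hu : ∀ θ, u θ = ∫ x in (0 : ℝ)..θ, f x * Real.sin x)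
    (hv : ∀ θ, v θ = ∫ x in (0 : ℝ)..θ, f x * Real.cos x)
    (hu2 : u (2 * π) = 0) (hv2 : v (2 * π) = 0)
    (horth : (∫ θ in (0 : ℝ)..(2 * π),
      (v θ * Real.sin θ - u θ * Real.cos θ) / k θ) = 0) :
    (∫ θ in (0 : ℝ)..(2 * π), f θ * (v θ * Real.sin θ - u θ * Real.cos θ)) ≤ 0 :=
  stmt_7_general k f hk hkpos hcos hsin hf u v hu hv hu2 horth
end

section
/- Let U : ℝ → ℝ be continuously differentiable with U(0) = U(π) = U(2π) = 0. Then the function θ ↦ U(θ)·U′(θ)·cot(θ) (defined on (0, 2π) away from θ = π, where cot has poles at 0, π, 2π) is Lebesgue integrable on (0, 2π) and ∫₀^{2π} U(θ)·U′(θ)·cot(θ) dθ ≥ 0. -/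
open Real MeasureTheory

open Set

/-!
Away from the poles of `cot`, `(U² cot θ / 2)' = U U' cot θ - (U / sin θ)² / 2`. Since `U` is
`C¹` and vanishes at the zeros `0, π, 2π` of `sin`, the mean value theorem and Jordan's inequality
give `|U| ≤ C |sin|` on `[0, 2π]`. Hence `U U' cot` and `(U / sin)²` are bounded, and `U² cot` is
continuous on `[0, 2π]` and vanishes at both ends and at `π`. The fundamental theorem of calculus off the
countable set `{π}` therefore gives `∫₀^{2π} U U' cot = ∫₀^{2π} (U / sin)² / 2 ≥ 0`.
-/

namespace Real

lemma cot_eq_div : cot = cos / sin := funext cot_eq_cos_div_sin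

lemma measurable_cot : Measurable cot := by
  rw [cot_eq_div]
  exact measurable_cos.div measurable_sin

lemma continuousAt_cot {x : ℝ} (hx : sin x ≠ 0) : ContinuousAt cot x := by
  rw [cot_eq_div]
  exact continuous_cos.continuousAt.div continuous_sin.continuousAt hx

lemma hasDerivAt_cot {x : ℝ} (hx : sin x ≠ 0) : HasDerivAt cot (-1 / sin x ^ 2) x := by
  rw [cot_eq_div]
  refine ((hasDerivAt_cos x).div (hasDerivAt_sin x) hx).congr_deriv ?_
  rw [← sin_sq_add_cos_sq x]
  ring

lemma abs_sin_sub_of_sin_eq_zero {z : ℝ} (hz : sin z = 0) (θ : ℝ) :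
    |sin (θ - z)| = |sin θ| := by
  have hcos : |cos z| = 1 := by
    rcases sin_eq_zero_iff_cos_eq.1 hz with h | h <;> simp [h]
  rw [sin_sub, hz, mul_zero, sub_zero, abs_mul, hcos, mul_one]

end Real

section SinBound

variable {U : ℝ → ℝ} {M : ℝ}

lemma abs_le_mul_abs_sin_of_sin_eq_zero {s : Set ℝ} {z θ : ℝ} (hs : Convex ℝ s)
    (hU : ∀ x ∈ s, DifferentiableAt ℝ U x) (hM : ∀ x ∈ s, ‖deriv U x‖ ≤ M)
    (hz : z ∈ s) (hθ : θ ∈ s) (hUz : U z = 0) (hsin : sin z = 0) (hdist : |θ - z| ≤ π / 2) :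
    |U θ| ≤ M * (π / 2) * |sin θ| := by
  have hM0 : 0 ≤ M := (norm_nonneg _).trans (hM z hz)
  have hmvt := hs.norm_image_sub_le_of_norm_deriv_le hU hM hz hθ
  rw [hUz, sub_zero, Real.norm_eq_abs, Real.norm_eq_abs] at hmvt
  calc |U θ| ≤ M * |θ - z| := hmvt
    _ = M * (π / 2) * (2 / π * |θ - z|) := by field_simp
    _ ≤ M * (π / 2) * |sin θ| := by
        rw [← Real.abs_sin_sub_of_sin_eq_zero hsin θ]
        gcongr
        exact mul_abs_le_abs_sin hdist

/-- Every point of `[0, 2π]` lies within `π / 2` of one of the zeros `0, π, 2π`. -/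
lemma abs_le_mul_abs_sin_on_Icc_zero_two_pi
    (hU : ∀ x ∈ Icc 0 (2 * π), DifferentiableAt ℝ U x)
    (hM : ∀ x ∈ Icc 0 (2 * π), ‖deriv U x‖ ≤ M)
    (h0 : U 0 = 0) (hπ : U π = 0) (h2π : U (2 * π) = 0) :
    ∀ θ ∈ Icc 0 (2 * π), |U θ| ≤ M * (π / 2) * |sin θ| := by
  intro θ hθ
  have key {z : ℝ} (hz : z ∈ Icc 0 (2 * π)) :=
    abs_le_mul_abs_sin_of_sin_eq_zero (convex_Icc 0 (2 * π)) hU hM hz hθ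
  have hπ0 := pi_pos
  rcases le_or_gt θ (π / 2) with hθ₁ | hθ₁
  · exact key ⟨le_rfl, by positivity⟩ h0 sin_zero (by rw [sub_zero, abs_le]; grind)
  rcases le_or_gt θ (3 * π / 2) with hθ₂ | hθ₂
  · exact key ⟨hπ0.le, by linarith⟩ hπ sin_pi (by rw [abs_le]; constructor <;> linarith)
  · exact key ⟨by positivity, le_rfl⟩ h2π sin_two_pi
      (by rw [abs_le]; constructor <;> linarith [hθ.2])

end SinBound

section CotBounds

variable {C : ℝ}

lemma abs_div_sin_le {u θ : ℝ} (hC : 0 ≤ C) (h : |u| ≤ C * |sin θ|) : |u / sin θ| ≤ C := by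
  rcases eq_or_ne (sin θ) 0 with hs | hs
  · simpa [hs] using hC
  · rw [abs_div, div_le_iff₀ (abs_pos.2 hs)]
    exact h

lemma abs_mul_cot_le {u θ : ℝ} (hC : 0 ≤ C) (h : |u| ≤ C * |sin θ|) : |u * cot θ| ≤ C := by
  calc |u * cot θ| = |u / sin θ| * |cos θ| := by
        rw [cot_eq_cos_div_sin, ← abs_mul, mul_div_assoc', div_mul_eq_mul_div]
    _ ≤ C * 1 := mul_le_mul (abs_div_sin_le hC h) (abs_cos_le_one θ) (abs_nonneg _) hC
    _ = C := mul_one C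

variable {U V : ℝ → ℝ} {s : Set ℝ}

lemma integrableOn_mul_mul_cot {M : ℝ} (hs : MeasurableSet s) (hs' : volume s ≠ ⊤)
    (hU : Measurable U) (hV : Measurable V) (hC : 0 ≤ C)
    (hUs : ∀ θ ∈ s, |U θ| ≤ C * |sin θ|) (hVs : ∀ θ ∈ s, |V θ| ≤ M) :
    IntegrableOn (fun θ => U θ * V θ * cot θ) s := by
  refine Measure.integrableOn_of_bounded (M := C * M) hs'
    ((hU.mul hV).mul measurable_cot).aestronglyMeasurable (ae_restrict_of_forall_mem hs ?_)
  intro θ hθ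
  rw [Real.norm_eq_abs, mul_right_comm, abs_mul]
  exact mul_le_mul (abs_mul_cot_le hC (hUs θ hθ)) (hVs θ hθ) (abs_nonneg _) hC

lemma integrableOn_div_sin_sq (hs : MeasurableSet s) (hs' : volume s ≠ ⊤)
    (hU : Measurable U) (hC : 0 ≤ C) (hUs : ∀ θ ∈ s, |U θ| ≤ C * |sin θ|) :
    IntegrableOn (fun θ => (U θ / sin θ) ^ 2) s := by
  refine Measure.integrableOn_of_bounded (M := C ^ 2) hs'
    ((hU.div measurable_sin).pow_const 2).aestronglyMeasurable (ae_restrict_of_forall_mem hs ?_)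
  intro θ hθ
  rw [Real.norm_eq_abs, abs_pow]
  exact pow_le_pow_left₀ (abs_nonneg _) (abs_div_sin_le hC (hUs θ hθ)) 2

lemma continuousOn_sq_mul_cot (hU : Continuous U) (hC : 0 ≤ C)
    (hUs : ∀ θ ∈ s, |U θ| ≤ C * |sin θ|) :
    ContinuousOn (fun θ => U θ ^ 2 * cot θ) s := by
  intro θ hθ
  rcases eq_or_ne (sin θ) 0 with hs | hs
  · -- `|U² cot| ≤ C |U|` on `s`, and `U θ = 0` because `sin θ = 0`.
    have hUθ : U θ = 0 := abs_nonpos_iff.1 (by simpa [hs] using hUs θ hθ)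
    rw [ContinuousWithinAt, hUθ, zero_pow two_ne_zero, zero_mul]
    refine squeeze_zero_norm' (a := fun x => C * |U x|) ?_ ?_
    · filter_upwards [self_mem_nhdsWithin] with x hx
      rw [Real.norm_eq_abs, sq, mul_assoc, abs_mul, mul_comm]
      exact mul_le_mul_of_nonneg_right (abs_mul_cot_le hC (hUs x hx)) (abs_nonneg _)
    · have hcont : Continuous fun x => C * |U x| := by fun_prop
      simpa [hUθ] using (hcont.tendsto θ).mono_left nhdsWithin_le_nhds
  · exact ((hU.continuousAt.pow 2).mul (Real.continuousAt_cot hs)).continuousWithinAt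

end CotBounds

lemma hasDerivAt_sq_mul_cot_div_two {U : ℝ → ℝ} {u' θ : ℝ} (hU : HasDerivAt U u' θ)
    (hθ : sin θ ≠ 0) :
    HasDerivAt (fun x => U x ^ 2 * cot x / 2) (U θ * u' * cot θ - (U θ / sin θ) ^ 2 / 2) θ := by
  refine (((hU.fun_pow 2).mul (Real.hasDerivAt_cot hθ)).div_const 2).congr_deriv ?_
  field_simp
  ring

lemma sin_ne_zero_of_mem_Ioo_diff {x : ℝ} (hx : x ∈ Ioo 0 (2 * π) \ {π}) : sin x ≠ 0 := by
  obtain ⟨⟨hx₀, hx₂⟩, hxπ⟩ := hx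
  rw [← neg_ne_zero, ← sin_sub_pi, Ne, sin_eq_zero_iff_of_lt_of_lt (by linarith) (by linarith),
    sub_eq_zero]
  exact hxπ

/-- if `U` is `C¹` with `U 0 = U π = U (2π) = 0`, then `θ ↦ U θ * U' θ * cot θ`
is Lebesgue integrable on `(0, 2π)` and its integral is nonnegative. -/
theorem stmt_9 (U : ℝ → ℝ) (hUc1 : ContDiff ℝ 1 U)
    (h0 : U 0 = 0) (hπ : U π = 0) (h2π : U (2 * π) = 0) :
    IntegrableOn (fun θ => U θ * deriv U θ * Real.cot θ) (Set.Ioo 0 (2 * π)) ∧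
      0 ≤ ∫ θ in Set.Ioo 0 (2 * π), U θ * deriv U θ * Real.cot θ := by
  have h2π0 : 0 ≤ 2 * π := by positivity
  have hU : Differentiable ℝ U := hUc1.differentiable one_ne_zero
  have hU' : Continuous (deriv U) := hUc1.continuous_deriv le_rfl
  obtain ⟨M, hM⟩ := (isCompact_Icc (a := 0) (b := 2 * π)).exists_bound_of_continuousOn
    hU'.continuousOn
  have hC : 0 ≤ M * (π / 2) :=
    mul_nonneg ((norm_nonneg _).trans (hM 0 ⟨le_rfl, h2π0⟩)) (by positivity)
  have hUsin := abs_le_mul_abs_sin_on_Icc_zero_two_pi (fun x _ => hU x) hM h0 hπ h2π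
  have hUsin' := fun θ (hθ : θ ∈ Ioo 0 (2 * π)) => hUsin θ (Ioo_subset_Icc_self hθ)
  have hvol : volume (Ioo 0 (2 * π)) ≠ ⊤ := measure_Ioo_lt_top.ne
  have hf := integrableOn_mul_mul_cot measurableSet_Ioo hvol hU.continuous.measurable
    hU'.measurable hC hUsin' fun θ hθ => hM θ (Ioo_subset_Icc_self hθ)
  have hq : IntegrableOn (fun θ => (U θ / sin θ) ^ 2 / 2) (Ioo 0 (2 * π)) :=
    (integrableOn_div_sin_sq measurableSet_Ioo hvol hU.continuous.measurable hC hUsin').div_const 2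
  refine ⟨hf, ?_⟩
  rw [← intervalIntegrable_iff_integrableOn_Ioo_of_le h2π0] at hf hq
  have hFTC := integral_eq_of_hasDerivAt_off_countable_of_le _ _ h2π0 (countable_singleton π)
    ((continuousOn_sq_mul_cot hU.continuous hC hUsin).div_const 2)
    (fun x hx => hasDerivAt_sq_mul_cot_div_two (hU x).hasDerivAt (sin_ne_zero_of_mem_Ioo_diff hx))
    (hf.sub hq)
  simp only [intervalIntegral.integral_sub hf hq, h0, h2π, zero_pow two_ne_zero, zero_mul, zero_div,
    sub_zero, sub_eq_zero] at hFTC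
  rw [← integral_Ioc_eq_integral_Ioo, ← intervalIntegral.integral_of_le h2π0, hFTC]
  exact intervalIntegral.integral_nonneg h2π0 fun θ _ => by positivity
end

section
/- Let U ⊆ ℝ² be open and let r, Y, E : U → ℝ³ be continuously differentiable maps. Assume that at every point of U: (i) ∂₁r × ∂₂r ≠ 0 (r is an immersion); (ii) (∂₁Y)·(∂₁r × ∂₂r) = 0 and (∂₂Y)·(∂₁r × ∂₂r) = 0 (the derivatives of Y are tangential); (iii) ∂₁Y × ∂₂r = ∂₂Y × ∂₁r; and (iv) (∂₁r)·(∂₁E) = 0, (∂₂r)·(∂₂E) = 0, and (∂₁r)·(∂₂E) + (∂₂r)·(∂₁E) = 0 (i.e. dr·dE = 0). Then at every point of U one has (∂₂Y)·(∂₁E) = (∂₁Y)·(∂₂E); consequently the 1-form ω = (∂₁Y·E)dx¹ + (∂₂Y·E)dx² is closed. -/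
open Matrix

lemma stmt_11_aux (a0 a1 a2 b0 b1 b2 y0 y1 y2 z0 z1 z2 e0 e1 e2 f0 f1 f2 : ℝ)
    (hs : (a1*b2-a2*b1)^2 + (a2*b0-a0*b2)^2 + (a0*b1-a1*b0)^2 ≠ 0)
    (h1 : y0*(a1*b2-a2*b1) + y1*(a2*b0-a0*b2) + y2*(a0*b1-a1*b0) = 0)
    (h2 : z0*(a1*b2-a2*b1) + z1*(a2*b0-a0*b2) + z2*(a0*b1-a1*b0) = 0)
    (hc0 : y1*b2 - y2*b1 = z1*a2 - z2*a1)
    (hc1 : y2*b0 - y0*b2 = z2*a0 - z0*a2)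
    (hc2 : y0*b1 - y1*b0 = z0*a1 - z1*a0)
    (g1 : a0*e0 + a1*e1 + a2*e2 = 0)
    (g2 : b0*f0 + b1*f1 + b2*f2 = 0)
    (g3 : (a0*f0 + a1*f1 + a2*f2) + (b0*e0 + b1*e1 + b2*e2) = 0) :
    z0*e0 + z1*e1 + z2*e2 = y0*f0 + y1*f1 + y2*f2 := by
  have key : (z0*e0 + z1*e1 + z2*e2 - (y0*f0 + y1*f1 + y2*f2)) *
      ((a1*b2-a2*b1)^2 + (a2*b0-a0*b2)^2 + (a0*b1-a1*b0)^2) = 0 := by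
    linear_combination
      (z0*(b1*(a0*b1-a1*b0) - b2*(a2*b0-a0*b2))
        + z1*(b2*(a1*b2-a2*b1) - b0*(a0*b1-a1*b0))
        + z2*(b0*(a2*b0-a0*b2) - b1*(a1*b2-a2*b1))) * g1
      + (z0*((a2*b0-a0*b2)*a2 - (a0*b1-a1*b0)*a1)
        + z1*((a0*b1-a1*b0)*a0 - (a1*b2-a2*b1)*a2)
        + z2*((a1*b2-a2*b1)*a1 - (a2*b0-a0*b2)*a0)) * g3
      + ((a1*b2-a2*b1)*e0 + (a2*b0-a0*b2)*e1 + (a0*b1-a1*b0)*e2) * h2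
      - (a0*f0 + a1*f1 + a2*f2) *
          ((a1*b2-a2*b1)*(hc0) + (a2*b0-a0*b2)*(hc1) + (a0*b1-a1*b0)*(hc2))
      - (y0*((a2*b0-a0*b2)*a2 - (a0*b1-a1*b0)*a1)
        + y1*((a0*b1-a1*b0)*a0 - (a1*b2-a2*b1)*a2)
        + y2*((a1*b2-a2*b1)*a1 - (a2*b0-a0*b2)*a0)) * g2
      - ((a1*b2-a2*b1)*f0 + (a2*b0-a0*b2)*f1 + (a0*b1-a1*b0)*f2) * h1
  rcases mul_eq_zero.mp key with h | h
  · linarith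
  · exact absurd h hs

/-- Lemma 3.4 in coordinates. Here `∂₁ f x = fderiv ℝ f x (1,0)` and
`∂₂ f x = fderiv ℝ f x (0,1)`, `crossProduct` is the cross product and `⬝ᵥ` the dot product
in `ℝ³`.  Under the stated hypotheses, `(∂₂Y)·(∂₁E) = (∂₁Y)·(∂₂E)` on `U`, i.e. the 1-form
`ω = (∂₁Y·E)dx¹ + (∂₂Y·E)dx²` is closed. -/
theorem stmt_11 (U : Set (ℝ × ℝ)) (hU : IsOpen U)
    (r Y E : ℝ × ℝ → Fin 3 → ℝ)
    (hr : ContDiffOn ℝ 1 r U) (hY : ContDiffOn ℝ 1 Y U) (hE : ContDiffOn ℝ 1 E U)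
    (himm : ∀ x ∈ U, crossProduct (fderiv ℝ r x (1, 0)) (fderiv ℝ r x (0, 1)) ≠ 0)
    (htang1 : ∀ x ∈ U,
      fderiv ℝ Y x (1, 0) ⬝ᵥ crossProduct (fderiv ℝ r x (1, 0)) (fderiv ℝ r x (0, 1)) = 0)
    (htang2 : ∀ x ∈ U,
      fderiv ℝ Y x (0, 1) ⬝ᵥ crossProduct (fderiv ℝ r x (1, 0)) (fderiv ℝ r x (0, 1)) = 0)
    (hcompat : ∀ x ∈ U,
      crossProduct (fderiv ℝ Y x (1, 0)) (fderiv ℝ r x (0, 1))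
        = crossProduct (fderiv ℝ Y x (0, 1)) (fderiv ℝ r x (1, 0)))
    (hE1 : ∀ x ∈ U, fderiv ℝ r x (1, 0) ⬝ᵥ fderiv ℝ E x (1, 0) = 0)
    (hE2 : ∀ x ∈ U, fderiv ℝ r x (0, 1) ⬝ᵥ fderiv ℝ E x (0, 1) = 0)
    (hE3 : ∀ x ∈ U,
      fderiv ℝ r x (1, 0) ⬝ᵥ fderiv ℝ E x (0, 1)
        + fderiv ℝ r x (0, 1) ⬝ᵥ fderiv ℝ E x (1, 0) = 0) :
    ∀ x ∈ U, fderiv ℝ Y x (0, 1) ⬝ᵥ fderiv ℝ E x (1, 0)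
      = fderiv ℝ Y x (1, 0) ⬝ᵥ fderiv ℝ E x (0, 1) := by
  intro x hx
  have hn := himm x hx
  have h1 := htang1 x hx
  have h2 := htang2 x hx
  have hc0 := congrFun (hcompat x hx) 0
  have hc1 := congrFun (hcompat x hx) 1
  have hc2 := congrFun (hcompat x hx) 2
  have g1 := hE1 x hx
  have g2 := hE2 x hx
  have g3 := hE3 x hx
  rw [Function.ne_iff] at hn
  obtain ⟨i, hi⟩ := hn
  simp only [cross_apply, dotProduct, Fin.sum_univ_three, Matrix.cons_val_zero,
    Matrix.cons_val_one, Matrix.head_cons, Matrix.cons_val_two,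
    Matrix.tail_cons] at h1 h2 g1 g2 g3 hc0 hc1 hc2 ⊢
  have hs : (fderiv ℝ r x (1, 0) 1 * fderiv ℝ r x (0, 1) 2
        - fderiv ℝ r x (1, 0) 2 * fderiv ℝ r x (0, 1) 1) ^ 2
      + (fderiv ℝ r x (1, 0) 2 * fderiv ℝ r x (0, 1) 0
        - fderiv ℝ r x (1, 0) 0 * fderiv ℝ r x (0, 1) 2) ^ 2
      + (fderiv ℝ r x (1, 0) 0 * fderiv ℝ r x (0, 1) 1
        - fderiv ℝ r x (1, 0) 1 * fderiv ℝ r x (0, 1) 0) ^ 2 ≠ 0 := by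
    fin_cases i <;>
      simp only [cross_apply, Matrix.cons_val_zero, Matrix.cons_val_one, Matrix.head_cons,
        Matrix.cons_val_two, Matrix.tail_cons, Pi.zero_apply] at hi <;>
      positivity
  exact stmt_11_aux (fderiv ℝ r x (1, 0) 0) (fderiv ℝ r x (1, 0) 1) (fderiv ℝ r x (1, 0) 2)
    (fderiv ℝ r x (0, 1) 0) (fderiv ℝ r x (0, 1) 1) (fderiv ℝ r x (0, 1) 2)
    (fderiv ℝ Y x (1, 0) 0) (fderiv ℝ Y x (1, 0) 1) (fderiv ℝ Y x (1, 0) 2)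
    (fderiv ℝ Y x (0, 1) 0) (fderiv ℝ Y x (0, 1) 1) (fderiv ℝ Y x (0, 1) 2)
    (fderiv ℝ E x (1, 0) 0) (fderiv ℝ E x (1, 0) 1) (fderiv ℝ E x (1, 0) 2)
    (fderiv ℝ E x (0, 1) 0) (fderiv ℝ E x (0, 1) 1) (fderiv ℝ E x (0, 1) 2) hs
    (by linarith) (by linarith) (by linarith) (by linarith) (by linarith)
    (by linarith) (by linarith) (by linarith)
end

section
/- Let T > 0 and let r, Y, τ : ℝ → ℝ³ be continuously differentiable, T-periodic maps satisfying τ′(t) = Y(t) × r′(t) for all t ∈ ℝ. Then for every pair of constant vectors a, b ∈ ℝ³ one has ∫₀^T Y′(t)·(a × r(t) + b) dt = 0. -/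
open Matrix

/-!
Along the curve, `G = Y ⬝ᵥ (a ⨯₃ r + b) + τ ⬝ᵥ a` is a primitive of the integrand: its derivative is
`Y' ⬝ᵥ (a ⨯₃ r + b) + Y ⬝ᵥ (a ⨯₃ r') + (Y ⨯₃ r') ⬝ᵥ a`, and the last two terms are triple products
that cancel. Since `G` is `T`-periodic, the integral over a period vanishes.
-/

theorem HasDerivAt.dotProduct {𝕜 ι : Type*} [NontriviallyNormedField 𝕜] [Fintype ι]
    {f g : 𝕜 → ι → 𝕜} {f' g' : ι → 𝕜} {t : 𝕜}
    (hf : HasDerivAt f f' t) (hg : HasDerivAt g g' t) :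
    HasDerivAt (fun s => f s ⬝ᵥ g s) (f' ⬝ᵥ g t + f t ⬝ᵥ g') t := by
  show HasDerivAt (fun s => ∑ i, f s i * g s i) (∑ i, f' i * g t i + ∑ i, f t i * g' i) t
  rw [← Finset.sum_add_distrib]
  exact HasDerivAt.fun_sum fun i _ =>
    (hasDerivAt_pi.mp hf i).mul (hasDerivAt_pi.mp hg i)

theorem HasDerivAt.const_cross {R : Type*} [NontriviallyNormedField R] [CompleteSpace R]
    {f : R → Fin 3 → R} {f' : Fin 3 → R} {t : R} (a : Fin 3 → R) (hf : HasDerivAt f f' t) :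
    HasDerivAt (fun s => a ⨯₃ f s) (a ⨯₃ f') t :=
  (LinearMap.toContinuousLinearMap (crossProduct a)).hasFDerivAt.comp_hasDerivAt t hf

theorem Function.Periodic.intervalIntegral_eq_zero_of_hasDerivAt {E : Type*}
    [NormedAddCommGroup E] [NormedSpace ℝ E] [CompleteSpace E] {G g : ℝ → E} {T : ℝ}
    (hG : Function.Periodic G T) (hderiv : ∀ t, HasDerivAt G (g t) t)
    (hint : IntervalIntegrable g MeasureTheory.volume 0 T) :
    ∫ t in (0 : ℝ)..T, g t = 0 := by
  rw [intervalIntegral.integral_eq_sub_of_hasDerivAt (fun t _ => hderiv t) hint,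
    ← zero_add T, hG 0, sub_self]

theorem dot_cross_add_cross_dot_eq_zero {R : Type*} [CommRing R] (a u v : Fin 3 → R) :
    u ⬝ᵥ (a ⨯₃ v) + (u ⨯₃ v) ⬝ᵥ a = 0 := by
  rw [triple_product_permutation, dotProduct_comm (u ⨯₃ v), ← dotProduct_add, cross_anticomm',
    dotProduct_zero]

theorem hasDerivAt_dot_const_cross_add_dot_const {r Y τ : ℝ → Fin 3 → ℝ} {r' Y' : Fin 3 → ℝ}
    {t : ℝ} (a b : Fin 3 → ℝ) (hr : HasDerivAt r r' t) (hY : HasDerivAt Y Y' t)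
    (hτ : HasDerivAt τ (Y t ⨯₃ r') t) :
    HasDerivAt (fun s => Y s ⬝ᵥ (a ⨯₃ r s + b) + τ s ⬝ᵥ a) (Y' ⬝ᵥ (a ⨯₃ r t + b)) t := by
  refine ((hY.dotProduct ((hr.const_cross a).add_const b)).add
    (hτ.dotProduct (hasDerivAt_const t a))).congr_deriv ?_
  rw [dotProduct_zero, add_zero, add_assoc, dot_cross_add_cross_dot_eq_zero, add_zero]

theorem stmt_12_general (T : ℝ) (r Y τ : ℝ → Fin 3 → ℝ)
    (hr : ContDiff ℝ 1 r) (hY : ContDiff ℝ 1 Y) (hτ : ContDiff ℝ 1 τ)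
    (hrper : Function.Periodic r T) (hYper : Function.Periodic Y T)
    (hτper : Function.Periodic τ T)
    (hrot : ∀ t : ℝ, deriv τ t = crossProduct (Y t) (deriv r t)) :
    ∀ a b : Fin 3 → ℝ,
      (∫ t in (0 : ℝ)..T, deriv Y t ⬝ᵥ (crossProduct a (r t) + b)) = 0 := by
  intro a b
  have hasDeriv {f : ℝ → Fin 3 → ℝ} (hf : ContDiff ℝ 1 f) (t : ℝ) :
      HasDerivAt f (deriv f t) t :=
    (hf.differentiable one_ne_zero t).hasDerivAt
  have hperiodic : Function.Periodic (fun s => Y s ⬝ᵥ (a ⨯₃ r s + b) + τ s ⬝ᵥ a) T := by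
    intro s
    simp only [hrper s, hYper s, hτper s]
  have hcont : Continuous fun t => deriv Y t ⬝ᵥ (a ⨯₃ r t + b) :=
    (hY.continuous_deriv le_rfl).dotProduct
      ((LinearMap.toContinuousLinearMap (crossProduct a)).continuous.comp hr.continuous
        |>.add continuous_const)
  refine hperiodic.intervalIntegral_eq_zero_of_hasDerivAt (fun t => ?_)
    (hcont.intervalIntegrable 0 T)
  exact hasDerivAt_dot_const_cross_add_dot_const a b (hasDeriv hr t) (hasDeriv hY t)
    (hrot t ▸ hasDeriv hτ t)

/-- Lemma 3.5: if `τ' = Y × r'` with `r, Y, τ` continuously differentiable and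
`T`-periodic, then `∫₀^T Y'(t) · (a × r(t) + b) dt = 0` for all constant vectors `a, b ∈ ℝ³`. -/
theorem stmt_12 (T : ℝ) (hT : 0 < T) (r Y τ : ℝ → Fin 3 → ℝ)
    (hr : ContDiff ℝ 1 r) (hY : ContDiff ℝ 1 Y) (hτ : ContDiff ℝ 1 τ)
    (hrper : Function.Periodic r T) (hYper : Function.Periodic Y T)
    (hτper : Function.Periodic τ T)
    (hrot : ∀ t : ℝ, deriv τ t = crossProduct (Y t) (deriv r t)) :
    ∀ a b : Fin 3 → ℝ,
      (∫ t in (0 : ℝ)..T, deriv Y t ⬝ᵥ (crossProduct a (r t) + b)) = 0 :=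
  stmt_12_general T r Y τ hr hY hτ hrper hYper hτper hrot
end

section
/- Let U ⊆ ℝ² be open and let r, τ : U → ℝ³ be continuously differentiable maps such that at every point of U: ∂₁r × ∂₂r ≠ 0 (r is an immersion), and the infinitesimal isometry equations hold: (∂₁r)·(∂₁τ) = 0, (∂₂r)·(∂₂τ) = 0, and (∂₁r)·(∂₂τ) + (∂₂r)·(∂₁τ) = 0. Then there exists a map Y : U → ℝ³ such that ∂₁τ = Y × ∂₁r and ∂₂τ = Y × ∂₂r at every point of U. -/
open Matrix

/-- Pointwise linear-algebra core: if `a × b ≠ 0` and `a·p = 0`, `b·q = 0`, `a·q + b·p = 0`,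
then there is a vector `Y` with `p = Y × a` and `q = Y × b`. -/
lemma key14 (a b p q : Fin 3 → ℝ) (hn : crossProduct a b ≠ 0)
    (h1 : a ⬝ᵥ p = 0) (h2 : b ⬝ᵥ q = 0) (h3 : a ⬝ᵥ q + b ⬝ᵥ p = 0) :
    ∃ Y : Fin 3 → ℝ, p = crossProduct Y a ∧ q = crossProduct Y b := by
  set n := crossProduct a b with hn_def
  have hN : n ⬝ᵥ n ≠ 0 := by
    rw [Ne, dotProduct_self_eq_zero]; exact hn
  simp only [dotProduct, Fin.sum_univ_three] at h1 h2 h3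
  set Z : Fin 3 → ℝ := (n ⬝ᵥ q) • a - (n ⬝ᵥ p) • b + (b ⬝ᵥ p) • n with hZ
  have hp : (n ⬝ᵥ n) • p = crossProduct Z a := by
    funext i
    fin_cases i <;>
      simp only [hZ, hn_def, cross_apply, dotProduct, Fin.sum_univ_three, Pi.smul_apply,
        Pi.add_apply, Pi.sub_apply, smul_eq_mul, Matrix.cons_val_zero, Matrix.cons_val_one,
        Matrix.head_cons, Matrix.cons_val_two, Matrix.tail_cons, Fin.isValue, Fin.zero_eta,
        Fin.mk_one, Fin.reduceFinMk]
    · linear_combination ((b 0^2+b 1^2+b 2^2) * a 0 - (a 0*b 0+a 1*b 1+a 2*b 2) * b 0) * h1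
    · linear_combination ((b 0^2+b 1^2+b 2^2) * a 1 - (a 0*b 0+a 1*b 1+a 2*b 2) * b 1) * h1
    · linear_combination ((b 0^2+b 1^2+b 2^2) * a 2 - (a 0*b 0+a 1*b 1+a 2*b 2) * b 2) * h1
  have hq : (n ⬝ᵥ n) • q = crossProduct Z b := by
    funext i
    fin_cases i <;>
      simp only [hZ, hn_def, cross_apply, dotProduct, Fin.sum_univ_three, Pi.smul_apply,
        Pi.add_apply, Pi.sub_apply, smul_eq_mul, Matrix.cons_val_zero, Matrix.cons_val_one,
        Matrix.head_cons, Matrix.cons_val_two, Matrix.tail_cons, Fin.isValue, Fin.zero_eta,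
        Fin.mk_one, Fin.reduceFinMk]
    · linear_combination ((b 0^2+b 1^2+b 2^2) * a 0 - (a 0*b 0+a 1*b 1+a 2*b 2) * b 0) * h3
        + ((a 0^2+a 1^2+a 2^2) * b 0 - (a 0*b 0+a 1*b 1+a 2*b 2) * a 0) * h2
    · linear_combination ((b 0^2+b 1^2+b 2^2) * a 1 - (a 0*b 0+a 1*b 1+a 2*b 2) * b 1) * h3
        + ((a 0^2+a 1^2+a 2^2) * b 1 - (a 0*b 0+a 1*b 1+a 2*b 2) * a 1) * h2
    · linear_combination ((b 0^2+b 1^2+b 2^2) * a 2 - (a 0*b 0+a 1*b 1+a 2*b 2) * b 2) * h3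
        + ((a 0^2+a 1^2+a 2^2) * b 2 - (a 0*b 0+a 1*b 1+a 2*b 2) * a 2) * h2
  refine ⟨(n ⬝ᵥ n)⁻¹ • Z, ?_, ?_⟩
  · rw [_root_.map_smul, LinearMap.smul_apply, ← hp, smul_smul, inv_mul_cancel₀ hN, one_smul]
  · rw [_root_.map_smul, LinearMap.smul_apply, ← hq, smul_smul, inv_mul_cancel₀ hN, one_smul]

/-- existence of the rotation vector field. If `r, τ : U → ℝ³` are continuously
differentiable, `r` is an immersion and `dr·dτ = 0` on `U`, then there is `Y : U → ℝ³` with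
`∂₁τ = Y × ∂₁r` and `∂₂τ = Y × ∂₂r` on `U`. Here `∂₁ f x = fderiv ℝ f x (1,0)` and
`∂₂ f x = fderiv ℝ f x (0,1)`. -/
theorem stmt_14 (U : Set (ℝ × ℝ)) (hU : IsOpen U)
    (r τ : ℝ × ℝ → Fin 3 → ℝ)
    (hr : ContDiffOn ℝ 1 r U) (hτ : ContDiffOn ℝ 1 τ U)
    (himm : ∀ x ∈ U, crossProduct (fderiv ℝ r x (1, 0)) (fderiv ℝ r x (0, 1)) ≠ 0)
    (hiso1 : ∀ x ∈ U, fderiv ℝ r x (1, 0) ⬝ᵥ fderiv ℝ τ x (1, 0) = 0)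
    (hiso2 : ∀ x ∈ U, fderiv ℝ r x (0, 1) ⬝ᵥ fderiv ℝ τ x (0, 1) = 0)
    (hiso3 : ∀ x ∈ U,
      fderiv ℝ r x (1, 0) ⬝ᵥ fderiv ℝ τ x (0, 1)
        + fderiv ℝ r x (0, 1) ⬝ᵥ fderiv ℝ τ x (1, 0) = 0) :
    ∃ Y : ℝ × ℝ → Fin 3 → ℝ, ∀ x ∈ U,
      fderiv ℝ τ x (1, 0) = crossProduct (Y x) (fderiv ℝ r x (1, 0)) ∧
      fderiv ℝ τ x (0, 1) = crossProduct (Y x) (fderiv ℝ r x (0, 1)) := by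
  have h : ∀ x : ℝ × ℝ, ∃ y : Fin 3 → ℝ, x ∈ U →
      (fderiv ℝ τ x (1, 0) = crossProduct y (fderiv ℝ r x (1, 0)) ∧
       fderiv ℝ τ x (0, 1) = crossProduct y (fderiv ℝ r x (0, 1))) := by
    intro x
    by_cases hx : x ∈ U
    · obtain ⟨y, hy1, hy2⟩ := key14 (fderiv ℝ r x (1, 0)) (fderiv ℝ r x (0, 1))
        (fderiv ℝ τ x (1, 0)) (fderiv ℝ τ x (0, 1)) (himm x hx) (hiso1 x hx) (hiso2 x hx)
        (by linarith [hiso3 x hx])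
      exact ⟨y, fun _ => ⟨hy1, hy2⟩⟩
    · exact ⟨0, fun h => absurd h hx⟩
  choose Y hY using h
  exact ⟨Y, fun x hx => hY x hx⟩
end
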